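/- For every integer m ≥ 1, a positive rational γ has length |γ| = m + 1 if and only if γ = α ∗ β for some pair α < β that is contiguous in Q̄_m = {0, +∞} ∪ {α ∈ ℚ_{>0} : |α| ≤ m} (i.e. no element of Q̄_m lies strictly between α and β in the order of ℚ_{≥0} ∪ {+∞}). -/

import Mathlib

namespace ResolutionGraph

/-- The value of the continued fraction `[a₁, …, aₙ] = a₁ + 1/[a₂, …, aₙ]`. -/
def cfVal : List ℕ → ℚ
  | [] => 0
  | [a] => (a : ℚ)
  | a :: b :: rest => (a : ℚ) + 1 / cfVal (b :: rest)

/-- `L = (a₁, …, aₙ)` is a continued fraction expansion of `q`: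
`n ≥ 1`, `a₁ ≥ 0`, `a₂, …, aₙ ≥ 1` and `[a₁, …, aₙ] = q`. -/
def IsExpansion (L : List ℕ) (q : ℚ) : Prop :=
  L ≠ [] ∧ (∀ x ∈ L.tail, 1 ≤ x) ∧ cfVal L = q

/-- `q` has length `m`, i.e. some expansion `(a₁, …, aₙ)` of `q` satisfies `a₁ + ⋯ + aₙ = m`. -/
def HasLen (q : ℚ) (m : ℕ) : Prop :=
  ∃ L : List ℕ, IsExpansion L q ∧ L.sum = m

/-- `α ∼ β` : one of them has an expansion `[a₁, …, a_k]` and the other equals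
`[a₁, …, a_k, n]` for some integer `n ≥ 1`. -/
def Related (α β : ℚ) : Prop :=
  (∃ (L : List ℕ) (n : ℕ), 1 ≤ n ∧ IsExpansion L α ∧ cfVal (L ++ [n]) = β) ∨
  (∃ (L : List ℕ) (n : ℕ), 1 ≤ n ∧ IsExpansion L β ∧ cfVal (L ++ [n]) = α)

/-- `γ` is the value of the convolution `α ∗ β`, computed from a witness of `α ∼ β`:
for an expansion `[a₁, …, a_k]` of one of them with the other equal to `[a₁, …, a_k, n]`
(`n ≥ 1` an integer), `γ = [a₁, …, a_k, n + 1]`. -/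
def ConvWitness (α β γ : ℚ) : Prop :=
  ∃ (L : List ℕ) (n : ℕ), 1 ≤ n ∧
    ((IsExpansion L α ∧ cfVal (L ++ [n]) = β) ∨ (IsExpansion L β ∧ cfVal (L ++ [n]) = α)) ∧
    cfVal (L ++ [n + 1]) = γ

/-- `α ≺ β` : `β` has an expansion `[a₁, …, a_k]` and `α = [a₁, …, a_ℓ, b]` for some
`0 ≤ ℓ ≤ k − 1` and `1 ≤ b ≤ a_{ℓ+1}`. -/
def Precedes (α β : ℚ) : Prop :=
  ∃ L : List ℕ, IsExpansion L β ∧ ∃ ℓ : ℕ, ∃ h : ℓ < L.length, ∃ b : ℕ,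
    1 ≤ b ∧ b ≤ L.get ⟨ℓ, h⟩ ∧ cfVal (L.take ℓ ++ [b]) = α

/-- `α` immediately precedes `β` : `α ≺ β` and `|β| = |α| + 1`. -/
def ImmediatelyPrecedes (α β : ℚ) : Prop :=
  Precedes α β ∧ ∃ a : ℕ, HasLen α a ∧ HasLen β (a + 1)

/-- The set `Q̄_m = {0, +∞} ∪ {α ∈ ℚ_{>0} : |α| ≤ m}`, viewed inside `WithTop ℚ`. -/
def Qbar (m : ℕ) : Set (WithTop ℚ) :=
  {0, ⊤} ∪ {x | ∃ q : ℚ, x = (q : WithTop ℚ) ∧ 0 < q ∧ ∃ a ≤ m, HasLen q a}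

/-- The convolution on `ℚ_{≥0} ∪ {+∞}` : either both arguments are finite and `γ` is given
by a convolution witness (this includes the convention `0 ∗ (1/n) = 1/(n+1)`, since
`0 = [0]` and `1/n = [0, n]`), or `α = n` is an integer `≥ 1`, `β = +∞` and
`γ = n ∗ (+∞) = n + 1`. -/
def ConvW (α β γ : WithTop ℚ) : Prop :=
  (∃ a b c : ℚ, α = (a : WithTop ℚ) ∧ β = (b : WithTop ℚ) ∧ γ = (c : WithTop ℚ) ∧
    ConvWitness a b c) ∨
  (∃ n : ℕ, 1 ≤ n ∧ α = ((n : ℚ) : WithTop ℚ) ∧ β = ⊤ ∧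
    γ = (((n : ℚ) + 1 : ℚ) : WithTop ℚ))

lemma cfVal_cons (a : ℕ) {T : List ℕ} (hT : T ≠ []) :
    cfVal (a :: T) = (a : ℚ) + 1 / cfVal T := by
  cases T with
  | nil => exact absurd rfl hT
  | cons b r => rfl

lemma one_le_cfVal : ∀ {L : List ℕ}, L ≠ [] → (∀ x ∈ L, 1 ≤ x) → (1:ℚ) ≤ cfVal L
  | [], h, _ => absurd rfl h
  | [a], _, h2 => by
      have := h2 a (by simp)
      show (1:ℚ) ≤ (a:ℚ)
      exact_mod_cast this
  | a :: b :: r, _, h2 => by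
      have hb : (1:ℚ) ≤ cfVal (b :: r) :=
        one_le_cfVal (by simp) (fun x hx => h2 x (List.mem_cons_of_mem a hx))
      have ha : 1 ≤ a := h2 a (by simp)
      have h0 : 0 < cfVal (b :: r) := lt_of_lt_of_le one_pos hb
      have : (1:ℚ) ≤ (a:ℚ) := by exact_mod_cast ha
      have h1 : 0 < 1 / cfVal (b :: r) := by positivity
      calc (1:ℚ) ≤ (a:ℚ) := this
        _ ≤ (a:ℚ) + 1/cfVal (b::r) := by linarith
        _ = cfVal (a :: b :: r) := rfl

lemma head_lt_cfVal (a : ℕ) {T : List ℕ} (hT : T ≠ []) (h : ∀ x ∈ T, 1 ≤ x) :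
    (a:ℚ) < cfVal (a :: T) ∧ cfVal (a :: T) ≤ (a:ℚ) + 1 := by
  have h1 := one_le_cfVal hT h
  have h0 : 0 < cfVal T := lt_of_lt_of_le one_pos h1
  rw [cfVal_cons a hT]
  constructor
  · have : 0 < 1 / cfVal T := by positivity
    linarith
  · have : 1 / cfVal T ≤ 1 := by rw [div_le_one h0]; exact h1
    linarith

lemma cfVal_nonneg : ∀ {L : List ℕ}, L ≠ [] → (∀ x ∈ L.tail, 1 ≤ x) → 0 ≤ cfVal L
  | [], h, _ => absurd rfl h
  | [a], _, _ => by show (0:ℚ) ≤ (a:ℚ); positivity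
  | a :: b :: r, _, ht => by
      have := (head_lt_cfVal a (T := b :: r) (by simp) ht).1
      have ha : (0:ℚ) ≤ a := by positivity
      linarith

lemma cfVal_append_pos {L : List ℕ} (hL : L ≠ []) (ht : ∀ x ∈ L.tail, 1 ≤ x)
    {T : List ℕ} (hT : T ≠ []) (hT1 : ∀ x ∈ T, 1 ≤ x) : 0 < cfVal (L ++ T) := by
  rcases L with _ | ⟨a, L'⟩
  · exact absurd rfl hL
  · have hne : L' ++ T ≠ [] := by simp [hT]
    have hall : ∀ x ∈ L' ++ T, 1 ≤ x := by
      intro x hx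
      rcases List.mem_append.mp hx with hx | hx
      · exact ht x hx
      · exact hT1 x hx
    have := (head_lt_cfVal a hne hall).1
    have ha : (0:ℚ) ≤ a := by positivity
    calc (0:ℚ) ≤ a := ha
      _ < cfVal (a :: (L' ++ T)) := this
      _ = cfVal ((a :: L') ++ T) := rfl

lemma eq_one_of_cfVal_eq_one : ∀ {L : List ℕ}, L ≠ [] → (∀ x ∈ L, 1 ≤ x) →
    cfVal L = 1 → L = [1]
  | [], h, _, _ => absurd rfl h
  | [a], _, _, hv => by
      have : (a:ℚ) = 1 := hv
      have : a = 1 := by exact_mod_cast this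
      rw [this]
  | a :: b :: r, _, h1, hv => by
      have ha : 1 ≤ a := h1 a (by simp)
      have := (head_lt_cfVal a (T := b :: r) (by simp)
        (fun x hx => h1 x (List.mem_cons_of_mem a hx))).1
      rw [hv] at this
      have : (1:ℚ) ≤ (a:ℚ) := by exact_mod_cast ha
      linarith

/-- Continued fraction expansion of `p/d` by the Euclidean algorithm. -/
def cexpAux (p d : ℕ) : List ℕ :=
  if h : d = 0 ∨ p % d = 0 then [p / d]
  else (p / d) :: cexpAux d (p % d)
termination_by d
decreasing_by
  push_neg at h
  exact Nat.mod_lt _ (Nat.pos_of_ne_zero h.1)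

lemma cexpAux_ne_nil (p d : ℕ) : cexpAux p d ≠ [] := by
  unfold cexpAux; split <;> simp

lemma cexpAux_val : ∀ d p : ℕ, d ≠ 0 → cfVal (cexpAux p d) = (p : ℚ) / d := by
  intro d
  induction d using Nat.strong_induction_on with
  | _ d ih =>
    intro p hd
    unfold cexpAux
    split
    · next h =>
      rcases h with h | h
      · exact absurd h hd
      · show ((p / d : ℕ) : ℚ) = (p:ℚ)/d
        exact Nat.cast_div (Nat.dvd_of_mod_eq_zero h) (by positivity)
    · next h =>
      push_neg at h
      have hr : p % d ≠ 0 := h.2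
      have hrd : p % d < d := Nat.mod_lt _ (Nat.pos_of_ne_zero hd)
      have ihv := ih (p % d) hrd d hr
      rw [cfVal_cons _ (cexpAux_ne_nil _ _), ihv]
      have hmod : (d:ℚ) * ((p / d : ℕ) : ℚ) + ((p % d : ℕ) : ℚ) = (p:ℚ) := by
        exact_mod_cast congrArg (Nat.cast : ℕ → ℚ) (Nat.div_add_mod p d)
      have hd0 : (0:ℚ) < (d:ℚ) := by
        have := Nat.pos_of_ne_zero hd; exact_mod_cast this
      have hr0 : (0:ℚ) < ((p % d : ℕ) : ℚ) := by
        have := Nat.pos_of_ne_zero hr; exact_mod_cast this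
      field_simp
      nlinarith [hmod]

lemma cexpAux_all_one_le : ∀ d p : ℕ, d ≠ 0 → d ≤ p → ∀ x ∈ cexpAux p d, 1 ≤ x := by
  intro d
  induction d using Nat.strong_induction_on with
  | _ d ih =>
    intro p hd hdp
    unfold cexpAux
    split
    · intro x hx
      simp only [List.mem_singleton] at hx
      subst hx
      exact Nat.one_le_div_iff (Nat.pos_of_ne_zero hd) |>.mpr hdp
    · next h =>
      push_neg at h
      have hrd : p % d < d := Nat.mod_lt _ (Nat.pos_of_ne_zero hd)
      intro x hx
      rcases List.mem_cons.mp hx with hx | hx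
      · subst hx
        exact Nat.one_le_div_iff (Nat.pos_of_ne_zero hd) |>.mpr hdp
      · exact ih (p % d) hrd d h.2 (le_of_lt hrd) x hx

lemma cexpAux_tail_one_le : ∀ d p : ℕ, ∀ x ∈ (cexpAux p d).tail, 1 ≤ x := by
  intro d p
  unfold cexpAux
  split
  · simp
  · next h =>
    push_neg at h
    have hrd : p % d < d := Nat.mod_lt _ (Nat.pos_of_ne_zero h.1)
    show ∀ x ∈ cexpAux d (p % d), 1 ≤ x
    exact cexpAux_all_one_le (p % d) d h.2 (le_of_lt hrd)

lemma exists_expansion {q : ℚ} (hq : 0 < q) :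
    ∃ T : List ℕ, IsExpansion T q ∧ (1 ≤ q → ∀ x ∈ T, 1 ≤ x) := by
  refine ⟨cexpAux q.num.toNat q.den, ⟨cexpAux_ne_nil _ _, cexpAux_tail_one_le _ _, ?_⟩, ?_⟩
  · rw [cexpAux_val q.den q.num.toNat q.den_nz]
    have : ((q.num.toNat : ℤ) : ℚ) = (q.num : ℚ) := by
      rw [Int.toNat_of_nonneg (le_of_lt (Rat.num_pos.mpr hq))]
    push_cast at this ⊢
    rw [this, Rat.num_div_den]
  · intro h1
    apply cexpAux_all_one_le _ _ q.den_nz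
    rw [← Rat.num_div_den q, le_div_iff₀ (by exact_mod_cast q.pos)] at h1
    have h2 : (q.den : ℤ) ≤ q.num := by exact_mod_cast (by linarith : (q.den:ℚ) ≤ (q.num:ℚ))
    omega


lemma one_le_sum {T : List ℕ} (hT : T ≠ []) (h : ∀ x ∈ T, 1 ≤ x) : 1 ≤ T.sum := by
  rcases T with _ | ⟨a, r⟩
  · exact absurd rfl hT
  · have := h a (by simp)
    simp only [List.sum_cons]
    omega

/-- value of an expansion of a natural number forces the sum. -/
lemma sum_eq_of_cfVal_natCast : ∀ {M : List ℕ} {a : ℕ}, M ≠ [] → (∀ x ∈ M.tail, 1 ≤ x) →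
    cfVal M = (a : ℚ) → M.sum = a
  | [], _, h, _, _ => absurd rfl h
  | [b], a, _, _, hv => by
      have : (b:ℚ) = (a:ℚ) := hv
      have : b = a := by exact_mod_cast this
      simpa using this
  | b :: c :: r, a, _, ht, hv => by
      have htail : ∀ x ∈ (c :: r), 1 ≤ x := ht
      have hlt := head_lt_cfVal b (T := c :: r) (by simp) htail
      rw [hv] at hlt
      have hba : b < a := by exact_mod_cast hlt.1
      have hab : a ≤ b + 1 := by exact_mod_cast hlt.2
      have hae : a = b + 1 := by omega
      have hs : (1:ℚ) ≤ cfVal (c :: r) := one_le_cfVal (by simp) htail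
      have hs0 : (0:ℚ) < cfVal (c :: r) := lt_of_lt_of_le one_pos hs
      have hveq : cfVal (b :: c :: r) = (b:ℚ) + 1 / cfVal (c :: r) := rfl
      have h1 : 1 / cfVal (c :: r) = 1 := by
        rw [hv, hae] at hveq
        push_cast at hveq
        linarith
      have hcf1 : cfVal (c :: r) = 1 := by
        field_simp at h1
        linarith
      have := eq_one_of_cfVal_eq_one (L := c :: r) (by simp) htail hcf1
      rw [List.sum_cons, this]
      simp [hae]

lemma sum_invariance : ∀ {L M : List ℕ} {q : ℚ}, L ≠ [] → (∀ x ∈ L.tail, 1 ≤ x) →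
    cfVal L = q → M ≠ [] → (∀ x ∈ M.tail, 1 ≤ x) → cfVal M = q → L.sum = M.sum
  | [], _, _, hL, _, _, _, _, _ => absurd rfl hL
  | [a], M, q, _, _, hv, hM, hMt, hMv => by
      have hva : cfVal [a] = (a:ℚ) := rfl
      have : cfVal M = (a : ℚ) := by rw [hMv, ← hv, hva]
      have := sum_eq_of_cfVal_natCast hM hMt this
      simpa using this.symm
  | a :: b :: r, M, q, _, ht, hv, hM, hMt, hMv => by
      rcases M with _ | ⟨a', M'⟩
      · exact absurd rfl hM
      rcases M' with _ | ⟨b', r'⟩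
      · -- M = [a'], q = a'
        have hva : cfVal [a'] = (a':ℚ) := rfl
        have : cfVal (a :: b :: r) = ((a' : ℕ) : ℚ) := by rw [hv, ← hMv, hva]
        have := sum_eq_of_cfVal_natCast (M := a :: b :: r) (by simp) ht this
        simpa using this
      · -- both composite
        have htL : ∀ x ∈ (b :: r), 1 ≤ x := ht
        have htM : ∀ x ∈ (b' :: r'), 1 ≤ x := hMt
        have hL1 := head_lt_cfVal a (T := b :: r) (by simp) htL
        have hM1 := head_lt_cfVal a' (T := b' :: r') (by simp) htM
        rw [hv] at hL1; rw [hMv] at hM1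
        have haa : a = a' := by
          have h1 : (a:ℚ) < (a':ℚ) + 1 := lt_of_lt_of_le hL1.1 hM1.2
          have h2 : (a':ℚ) < (a:ℚ) + 1 := lt_of_lt_of_le hM1.1 hL1.2
          have h1' : a < a' + 1 := by exact_mod_cast h1
          have h2' : a' < a + 1 := by exact_mod_cast h2
          omega
        have hsL : (1:ℚ) ≤ cfVal (b :: r) := one_le_cfVal (by simp) htL
        have hsM : (1:ℚ) ≤ cfVal (b' :: r') := one_le_cfVal (by simp) htM
        have hs0L : (0:ℚ) < cfVal (b :: r) := lt_of_lt_of_le one_pos hsL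
        have hs0M : (0:ℚ) < cfVal (b' :: r') := lt_of_lt_of_le one_pos hsM
        have hveq : (a:ℚ) + 1 / cfVal (b :: r) = q := hv
        have hMveq : (a':ℚ) + 1 / cfVal (b' :: r') = q := hMv
        have heq : cfVal (b :: r) = cfVal (b' :: r') := by
          rw [haa] at hveq
          have : 1 / cfVal (b :: r) = 1 / cfVal (b' :: r') := by linarith
          field_simp at this
          linarith
        have := sum_invariance (L := b :: r) (M := b' :: r') (q := cfVal (b :: r))
          (by simp) (fun x hx => htL x (List.mem_cons_of_mem b hx)) rfl
          (by simp) (fun x hx => htM x (List.mem_cons_of_mem b' hx)) heq.symm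
        simp only [List.sum_cons] at this ⊢
        omega

lemma hasLen_unique {q : ℚ} {j k : ℕ} (h1 : HasLen q j) (h2 : HasLen q k) : j = k := by
  obtain ⟨L, ⟨hL, hLt, hLv⟩, rfl⟩ := h1
  obtain ⟨M, ⟨hM, hMt, hMv⟩, rfl⟩ := h2
  exact sum_invariance hL hLt hLv hM hMt hMv

lemma le_sum : ∀ {L : List ℕ} {q : ℚ}, L ≠ [] → (∀ x ∈ L.tail, 1 ≤ x) →
    cfVal L = q → q ≤ (L.sum : ℚ)
  | [], _, hL, _, _ => absurd rfl hL
  | [a], q, _, _, hv => by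
      have hva : cfVal [a] = (a:ℚ) := rfl
      rw [← hv, hva]; simp
  | a :: b :: r, q, _, ht, hv => by
      have htail : ∀ x ∈ (b :: r), 1 ≤ x := ht
      have h2 := (head_lt_cfVal a (T := b :: r) (by simp) htail).2
      rw [hv] at h2
      have hsum : 1 ≤ (b :: r).sum := one_le_sum (by simp) htail
      have : (1:ℚ) ≤ ((b :: r).sum : ℚ) := by exact_mod_cast hsum
      have : ((a :: b :: r).sum : ℚ) = (a:ℚ) + ((b :: r).sum : ℚ) := by
        simp [List.sum_cons]
      linarith

lemma cfVal_concat_one : ∀ (N : List ℕ) (x : ℕ), cfVal (N ++ [x, 1]) = cfVal (N ++ [x+1])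
  | [], x => by
      show cfVal [x, 1] = cfVal [x+1]
      show (x:ℚ) + 1 / cfVal [1] = ((x+1 : ℕ) : ℚ)
      show (x:ℚ) + 1 / ((1:ℕ):ℚ) = ((x+1 : ℕ) : ℚ)
      push_cast
      norm_num
  | a :: N, x => by
      have h1 : N ++ [x,1] ≠ [] := by simp
      have h2 : N ++ [x+1] ≠ [] := by simp
      rw [List.cons_append, List.cons_append, cfVal_cons a h1, cfVal_cons a h2,
        cfVal_concat_one N x]

lemma btw_inv {u v w : ℚ} (hu : 0 < u) (hv : 0 < v) (hw : 0 < w)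
    (h : min u v < w ∧ w < max u v) : min u⁻¹ v⁻¹ < w⁻¹ ∧ w⁻¹ < max u⁻¹ v⁻¹ := by
  rcases le_total u v with huv | huv
  · rw [min_eq_left huv, max_eq_right huv] at h
    rw [min_eq_right (inv_anti₀ hu huv), max_eq_left (inv_anti₀ hu huv)]
    exact ⟨inv_strictAnti₀ hw h.2, inv_strictAnti₀ hu h.1⟩
  · rw [min_eq_right huv, max_eq_left huv] at h
    rw [min_eq_left (inv_anti₀ hv huv), max_eq_right (inv_anti₀ hv huv)]
    exact ⟨inv_strictAnti₀ hw h.2, inv_strictAnti₀ hv h.1⟩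

lemma btw_mapstep (a : ℕ) {u v w : ℚ} (hu : 0 < u) (hv : 0 < v) (hw : 0 < w)
    (h : min u v < w ∧ w < max u v) :
    min ((a:ℚ)+1/u) ((a:ℚ)+1/v) < (a:ℚ)+1/w ∧
      (a:ℚ)+1/w < max ((a:ℚ)+1/u) ((a:ℚ)+1/v) := by
  obtain ⟨h1, h2⟩ := btw_inv hu hv hw h
  simp only [one_div]
  rw [min_add_add_left, max_add_add_left]
  exact ⟨by linarith, by linarith⟩

lemma between_expand : ∀ (L : List ℕ), L ≠ [] → (∀ x ∈ L.tail, 1 ≤ x) →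
    ∀ (n : ℕ), 1 ≤ n → ∀ δ : ℚ,
    min (cfVal L) (cfVal (L ++ [n])) < δ ∧ δ < max (cfVal L) (cfVal (L ++ [n])) →
    ∃ T, T ≠ [] ∧ (∀ x ∈ T, 1 ≤ x) ∧ (n:ℚ) < cfVal T ∧ cfVal (L ++ T) = δ
  | [], hL, _, _, _, _, _ => absurd rfl hL
  | [a], _, _, n, hn, δ, h => by
      have hn0 : (0:ℚ) < (n:ℚ) := by exact_mod_cast hn
      have hv1 : cfVal [a] = (a:ℚ) := rfl
      have hv2 : cfVal ([a] ++ [n]) = (a:ℚ) + 1/(n:ℚ) := by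
        show cfVal [a, n] = _
        rfl
      rw [hv1, hv2] at h
      have hinv : (0:ℚ) < 1/(n:ℚ) := by positivity
      have hle : (a:ℚ) ≤ (a:ℚ) + 1/(n:ℚ) := by linarith
      rw [min_eq_left hle, max_eq_right hle] at h
      obtain ⟨h1, h2⟩ := h
      have hδa : 0 < δ - (a:ℚ) := by linarith
      have hlt : δ - (a:ℚ) < (n:ℚ)⁻¹ := by rw [← one_div]; linarith
      have hnt : (n:ℚ) < (δ - a)⁻¹ := by
        have := inv_strictAnti₀ hδa hlt
        rwa [inv_inv] at this
      have ht0 : (0:ℚ) < (δ - a)⁻¹ := by positivity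
      obtain ⟨T, hTexp, hTall⟩ := exists_expansion ht0
      have h1n : (1:ℚ) ≤ (n:ℚ) := by exact_mod_cast hn
      have h1T : (1:ℚ) ≤ (δ - a)⁻¹ := le_of_lt (lt_of_le_of_lt h1n hnt)
      refine ⟨T, hTexp.1, hTall h1T, ?_, ?_⟩
      · rw [hTexp.2.2]; exact hnt
      · show cfVal (a :: T) = δ
        rw [cfVal_cons a hTexp.1, hTexp.2.2, one_div, inv_inv]
        ring
  | a :: b :: r, _, ht, n, hn, δ, h => by
      have hL' : (b :: r) ≠ [] := by simp
      have htL' : ∀ x ∈ b :: r, 1 ≤ x := ht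
      have ht' : ∀ x ∈ (b :: r).tail, 1 ≤ x := fun x hx => ht x (List.mem_cons_of_mem b hx)
      have htapp : ∀ x ∈ (b :: r) ++ [n], 1 ≤ x := by
        intro x hx
        rcases List.mem_append.mp hx with hx | hx
        · exact htL' x hx
        · simp only [List.mem_singleton] at hx; omega
      have hu : (1:ℚ) ≤ cfVal (b :: r) := one_le_cfVal hL' htL'
      have hu' : (1:ℚ) ≤ cfVal ((b :: r) ++ [n]) := one_le_cfVal (by simp) htapp
      have hu0 : (0:ℚ) < cfVal (b :: r) := lt_of_lt_of_le one_pos hu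
      have hu'0 : (0:ℚ) < cfVal ((b :: r) ++ [n]) := lt_of_lt_of_le one_pos hu'
      have hv1 : cfVal (a :: b :: r) = (a:ℚ) + 1 / cfVal (b :: r) := rfl
      have hv2 : cfVal ((a :: b :: r) ++ [n])
          = (a:ℚ) + 1 / cfVal ((b :: r) ++ [n]) := cfVal_cons a (by simp)
      rw [hv1, hv2, min_add_add_left, max_add_add_left] at h
      have hm1 : min (1/cfVal (b :: r)) (1/cfVal ((b :: r) ++ [n])) < δ - (a:ℚ) := by
        have := h.1; linarith
      have hm2 : δ - (a:ℚ) < max (1/cfVal (b :: r)) (1/cfVal ((b :: r) ++ [n])) := by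
        have := h.2; linarith
      have hδa : (0:ℚ) < δ - a :=
        lt_trans (lt_min (by positivity) (by positivity)) hm1
      have hbtw := btw_inv (u := 1/cfVal (b :: r)) (v := 1/cfVal ((b :: r) ++ [n]))
        (by positivity) (by positivity) hδa ⟨hm1, hm2⟩
      rw [one_div, one_div, inv_inv, inv_inv] at hbtw
      obtain ⟨T, hTne, hTall, hTgt, hTval⟩ :=
        between_expand (b :: r) hL' ht' n hn ((δ - a)⁻¹) hbtw
      refine ⟨T, hTne, hTall, hTgt, ?_⟩
      show cfVal (a :: ((b :: r) ++ T)) = δ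
      rw [cfVal_cons a (by simp), hTval, one_div, inv_inv]
      ring

lemma conv_between : ∀ (L : List ℕ), L ≠ [] → (∀ x ∈ L.tail, 1 ≤ x) → ∀ n : ℕ, 1 ≤ n →
    min (cfVal L) (cfVal (L ++ [n])) < cfVal (L ++ [n+1]) ∧
      cfVal (L ++ [n+1]) < max (cfVal L) (cfVal (L ++ [n]))
  | [], hL, _, _, _ => absurd rfl hL
  | [a], _, _, n, hn => by
      have hn0 : (0:ℚ) < (n:ℚ) := by exact_mod_cast hn
      have hv1 : cfVal [a] = (a:ℚ) := rfl
      have hv2 : cfVal ([a] ++ [n]) = (a:ℚ) + 1/(n:ℚ) := rfl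
      have hv3 : cfVal ([a] ++ [n+1]) = (a:ℚ) + 1/((n:ℚ)+1) := by
        show cfVal [a, n+1] = _
        show (a:ℚ) + 1 / cfVal [n+1] = _
        have : cfVal [n+1] = ((n+1 : ℕ) : ℚ) := rfl
        rw [this]; push_cast; ring
      rw [hv1, hv2, hv3]
      have hinv : (0:ℚ) < 1/(n:ℚ) := by positivity
      have hle : (a:ℚ) ≤ (a:ℚ) + 1/(n:ℚ) := by linarith
      rw [min_eq_left hle, max_eq_right hle]
      constructor
      · have : (0:ℚ) < 1/((n:ℚ)+1) := by positivity
        linarith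
      · have : 1/((n:ℚ)+1) < 1/(n:ℚ) := by
          apply one_div_lt_one_div_of_lt hn0; linarith
        linarith
  | a :: b :: r, _, ht, n, hn => by
      have hL' : (b :: r) ≠ [] := by simp
      have htL' : ∀ x ∈ b :: r, 1 ≤ x := ht
      have ht' : ∀ x ∈ (b :: r).tail, 1 ≤ x := fun x hx => ht x (List.mem_cons_of_mem b hx)
      have htapp : ∀ k : ℕ, 1 ≤ k → ∀ x ∈ (b :: r) ++ [k], 1 ≤ x := by
        intro k hk x hx
        rcases List.mem_append.mp hx with hx | hx
        · exact htL' x hx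
        · simp only [List.mem_singleton] at hx; omega
      have hu : (1:ℚ) ≤ cfVal (b :: r) := one_le_cfVal hL' htL'
      have hu' : (1:ℚ) ≤ cfVal ((b :: r) ++ [n]) := one_le_cfVal (by simp) (htapp n hn)
      have hu'' : (1:ℚ) ≤ cfVal ((b :: r) ++ [n+1]) :=
        one_le_cfVal (by simp) (htapp (n+1) (by omega))
      have ih := conv_between (b :: r) hL' ht' n hn
      have hstep := btw_mapstep a (lt_of_lt_of_le one_pos hu) (lt_of_lt_of_le one_pos hu')
        (lt_of_lt_of_le one_pos hu'') ih
      have hv1 : cfVal (a :: b :: r) = (a:ℚ) + 1 / cfVal (b :: r) := rfl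
      have hv2 : cfVal ((a :: b :: r) ++ [n]) = (a:ℚ) + 1 / cfVal ((b :: r) ++ [n]) :=
        cfVal_cons a (by simp)
      have hv3 : cfVal ((a :: b :: r) ++ [n+1]) = (a:ℚ) + 1 / cfVal ((b :: r) ++ [n+1]) :=
        cfVal_cons a (by simp)
      rw [hv1, hv2, hv3]
      exact hstep

lemma tail_append_one_le {L T : List ℕ} (ht : ∀ x ∈ L.tail, 1 ≤ x)
    (hT : ∀ x ∈ T, 1 ≤ x) : ∀ x ∈ (L ++ T).tail, 1 ≤ x := by
  rcases L with _ | ⟨a, L'⟩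
  · intro x hx; exact hT x (List.mem_of_mem_tail hx)
  · intro x hx
    rcases List.mem_append.mp hx with hx | hx
    · exact ht x hx
    · exact hT x hx

lemma mem_tail_concat (A : List ℕ) (hA : A ≠ []) (c : ℕ) : c ∈ (A ++ [c]).tail := by
  rcases A with _ | ⟨a, A'⟩
  · exact absurd rfl hA
  · show c ∈ A' ++ [c]
    exact List.mem_append.mpr (Or.inr (by simp))

lemma hasLen_nat (k : ℕ) : HasLen (k:ℚ) k :=
  ⟨[k], ⟨by simp, by simp, rfl⟩, by simp⟩

lemma exists_good_expansion {q : ℚ} {k : ℕ} (h : HasLen q k) (hk : 2 ≤ k) :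
    ∃ M c, IsExpansion (M ++ [c]) q ∧ M.sum + c = k ∧ 2 ≤ c := by
  obtain ⟨L, ⟨hLne, hLt, hLv⟩, hsum⟩ := h
  rcases List.eq_nil_or_concat L with rfl | ⟨M, c', rfl⟩
  · exact absurd rfl hLne
  simp only [List.concat_eq_append] at hLne hLt hLv hsum
  by_cases hc2 : 2 ≤ c'
  · exact ⟨M, c', ⟨by simp, hLt, hLv⟩, by simpa using hsum, hc2⟩
  rcases List.eq_nil_or_concat M with rfl | ⟨N, x, rfl⟩
  · exfalso
    simp only [List.nil_append, List.sum_cons, List.sum_nil] at hsum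
    omega
  · simp only [List.concat_eq_append] at hLne hLt hLv hsum
    have hc'1 : c' = 1 := by
      rcases Nat.lt_or_ge c' 1 with h0 | h1
      · exfalso
        have hmem : c' ∈ ((N ++ [x]) ++ [c']).tail := mem_tail_concat _ (by simp) c'
        have := hLt c' hmem
        omega
      · omega
    subst hc'1
    have hx1 : 1 ≤ x := by
      rcases N with _ | ⟨a, N'⟩
      · simp only [List.nil_append, List.sum_append, List.sum_cons, List.sum_nil] at hsum
        omega
      · have hmem : x ∈ ((a :: N') ++ [x]).tail := mem_tail_concat _ (by simp) x
        have hmem2 : x ∈ (((a :: N') ++ [x]) ++ [1]).tail := by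
          show x ∈ (N' ++ [x]) ++ [1]
          exact List.mem_append.mpr (Or.inl hmem)
        exact hLt x hmem2
    have hvalue : cfVal (N ++ [x+1]) = q := by
      rw [← cfVal_concat_one N x]
      rw [← hLv]
      congr 1
      simp
    have htail : ∀ y ∈ (N ++ [x+1]).tail, 1 ≤ y := by
      rcases N with _ | ⟨a, N'⟩
      · simp
      · intro y hy
        show 1 ≤ y
        rcases List.mem_append.mp (hy : y ∈ N' ++ [x+1]) with h | h
        · apply hLt
          show y ∈ (N' ++ [x]) ++ [1]
          exact List.mem_append.mpr (Or.inl (List.mem_append.mpr (Or.inl h)))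
        · simp only [List.mem_singleton] at h; omega
    refine ⟨N, x+1, ⟨by simp, htail, hvalue⟩, ?_, by omega⟩
    have : ((N ++ [x]) ++ [1]).sum = N.sum + x + 1 := by simp [List.sum_append]; omega
    rw [this] at hsum
    omega

lemma mem_Qbar {m : ℕ} {x : WithTop ℚ} :
    x ∈ Qbar m ↔ x = 0 ∨ x = ⊤ ∨
      ∃ q : ℚ, x = (q : WithTop ℚ) ∧ 0 < q ∧ ∃ a ≤ m, HasLen q a := by
  simp [Qbar, Set.mem_union, Set.mem_insert_iff, Set.mem_setOf_eq, or_assoc]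

/-- For every integer `m ≥ 1`, a positive rational `γ` has length
`|γ| = m + 1` if and only if `γ = α ∗ β` for some pair `α < β` that is contiguous in
`Q̄_m = {0, +∞} ∪ {α ∈ ℚ_{>0} : |α| ≤ m}`, i.e. no element of `Q̄_m` lies strictly between
`α` and `β` in the order of `ℚ_{≥0} ∪ {+∞}`. -/
theorem length_succ_iff_conv_of_contiguous (m : ℕ) (hm : 1 ≤ m) (γ : ℚ) (hγ : 0 < γ) :
    HasLen γ (m + 1) ↔
      ∃ α β : WithTop ℚ, α ∈ Qbar m ∧ β ∈ Qbar m ∧ α < β ∧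
        (∀ δ ∈ Qbar m, ¬ (α < δ ∧ δ < β)) ∧ ConvW α β (γ : WithTop ℚ) := by
  constructor
  · intro h
    obtain ⟨M, c, ⟨hMne, hMt, hMv⟩, hMsum, hc2⟩ := exists_good_expansion h (by omega)
    rcases M with _ | ⟨a, L''⟩
    · -- integer case : γ = c = m + 1
      have hγc : γ = (c:ℚ) := by rw [← hMv]; rfl
      simp only [List.sum_nil, Nat.zero_add] at hMsum
      refine ⟨((m:ℚ) : WithTop ℚ), ⊤, ?_, ?_, WithTop.coe_lt_top _, ?_, ?_⟩
      · exact mem_Qbar.mpr (Or.inr (Or.inr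
          ⟨(m:ℚ), rfl, by exact_mod_cast hm, m, le_refl m, hasLen_nat m⟩))
      · exact mem_Qbar.mpr (Or.inr (Or.inl rfl))
      · intro δ hδ hcontra
        rcases mem_Qbar.mp hδ with rfl | rfl | ⟨q, rfl, hq0, a, ham, hqlen⟩
        · have h1 : (m:ℚ) < 0 := by exact_mod_cast hcontra.1
          have : (0:ℚ) ≤ (m:ℚ) := by positivity
          linarith
        · exact absurd hcontra.2 (lt_irrefl ⊤)
        · obtain ⟨Lq, hLq, hLqsum⟩ := hqlen
          have hqle : q ≤ (a:ℚ) := by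
            have := le_sum hLq.1 hLq.2.1 hLq.2.2
            rw [hLqsum] at this; exact this
          have ham' : (a:ℚ) ≤ (m:ℚ) := by exact_mod_cast ham
          have := WithTop.coe_lt_coe.mp hcontra.1
          linarith
      · right
        have : γ = (m:ℚ) + 1 := by rw [hγc, hMsum]; push_cast; ring
        exact ⟨m, hm, rfl, rfl, by rw [this]⟩
    · -- non-integer case
      generalize hLdef : (a :: L'' : List ℕ) = L at *
      have hLne : L ≠ [] := by rw [← hLdef]; simp
      have hLt : ∀ x ∈ L.tail, 1 ≤ x := by
        intro x hx
        apply hMt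
        rw [← hLdef] at hx ⊢
        show x ∈ L'' ++ [c]
        exact List.mem_append.mpr (Or.inl hx)
      have hn : 1 ≤ c - 1 := by omega
      set n := c - 1 with hndef
      have hnc : n + 1 = c := by omega
      have hone : ∀ x ∈ ([n] : List ℕ), 1 ≤ x := by
        intro x hx; simp only [List.mem_singleton] at hx; omega
      have hLtail_n : ∀ x ∈ (L ++ [n]).tail, 1 ≤ x := tail_append_one_le hLt hone
      have hexpL : IsExpansion L (cfVal L) := ⟨hLne, hLt, rfl⟩
      have hexpβ : IsExpansion (L ++ [n]) (cfVal (L ++ [n])) := ⟨by simp, hLtail_n, rfl⟩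
      have hβpos : 0 < cfVal (L ++ [n]) := cfVal_append_pos hLne hLt (by simp) hone
      have hsumLc : L.sum + c = m + 1 := hMsum
      have hβlen : HasLen (cfVal (L ++ [n])) (L.sum + n) := ⟨L ++ [n], hexpβ, by simp⟩
      have hγval : cfVal (L ++ [n+1]) = γ := by rw [hnc]; exact hMv
      have hbtw := conv_between L hLne hLt n hn
      rw [hγval] at hbtw
      have hαβ : cfVal L ≠ cfVal (L ++ [n]) := by
        intro e
        rw [e, min_self, max_self] at hbtw
        exact absurd (lt_trans hbtw.1 hbtw.2) (lt_irrefl _)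
      have hαmem : ((cfVal L : ℚ) : WithTop ℚ) ∈ Qbar m := by
        by_cases hα0 : cfVal L = 0
        · rw [hα0]
          exact mem_Qbar.mpr (Or.inl rfl)
        · have hαpos : 0 < cfVal L := lt_of_le_of_ne (cfVal_nonneg hLne hLt) (Ne.symm hα0)
          exact mem_Qbar.mpr (Or.inr (Or.inr
            ⟨cfVal L, rfl, hαpos, L.sum, by omega, ⟨L, hexpL, rfl⟩⟩))
      have hβmem : ((cfVal (L ++ [n]) : ℚ) : WithTop ℚ) ∈ Qbar m :=
        mem_Qbar.mpr (Or.inr (Or.inr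
          ⟨cfVal (L ++ [n]), rfl, hβpos, L.sum + n, by omega, hβlen⟩))
      refine ⟨((min (cfVal L) (cfVal (L ++ [n])) : ℚ) : WithTop ℚ),
        ((max (cfVal L) (cfVal (L ++ [n])) : ℚ) : WithTop ℚ), ?_, ?_, ?_, ?_, ?_⟩
      · rcases min_choice (cfVal L) (cfVal (L ++ [n])) with h' | h' <;> rw [h']
        · exact hαmem
        · exact hβmem
      · rcases max_choice (cfVal L) (cfVal (L ++ [n])) with h' | h' <;> rw [h']
        · exact hαmem
        · exact hβmem
      · exact WithTop.coe_lt_coe.mpr (min_lt_max.mpr hαβ)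
      · intro δ hδ hcontra
        rcases mem_Qbar.mp hδ with rfl | rfl | ⟨q, rfl, hq0, a', ham, hqlen⟩
        · have h1 : min (cfVal L) (cfVal (L ++ [n])) < 0 := by exact_mod_cast hcontra.1
          have : 0 ≤ min (cfVal L) (cfVal (L ++ [n])) :=
            le_min (cfVal_nonneg hLne hLt) (le_of_lt hβpos)
          linarith
        · exact absurd hcontra.2 (not_top_lt)
        · have h1 : min (cfVal L) (cfVal (L ++ [n])) < q := by exact_mod_cast hcontra.1
          have h2 : q < max (cfVal L) (cfVal (L ++ [n])) := by exact_mod_cast hcontra.2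
          obtain ⟨T, hTne, hT1, hTgt, hTval⟩ := between_expand L hLne hLt n hn q ⟨h1, h2⟩
          have hexpq : IsExpansion (L ++ T) q :=
            ⟨by simp [hTne], tail_append_one_le hLt hT1, hTval⟩
          have hqlen2 : HasLen q (L.sum + T.sum) := ⟨L ++ T, hexpq, by simp⟩
          have ha'eq : a' = L.sum + T.sum := hasLen_unique hqlen hqlen2
          have hTsum : (n:ℚ) < (T.sum:ℚ) := by
            have := le_sum hTne (fun x hx => hT1 x (List.mem_of_mem_tail hx)) rfl
            linarith [hTgt]
          have hTn : n < T.sum := by exact_mod_cast hTsum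
          omega
      · refine Or.inl ⟨min (cfVal L) (cfVal (L ++ [n])), max (cfVal L) (cfVal (L ++ [n])),
          γ, rfl, rfl, rfl, L, n, hn, ?_, hγval⟩
        rcases le_total (cfVal L) (cfVal (L ++ [n])) with hle | hle
        · left
          refine ⟨?_, (max_eq_right hle).symm⟩
          rw [min_eq_left hle]
          exact hexpL
        · right
          refine ⟨?_, (min_eq_right hle).symm⟩
          rw [max_eq_left hle]
          exact hexpL
  · rintro ⟨A, B, hA, hB, hAB, hcontig, hconv⟩
    rcases hconv with ⟨a, b, c, hAa, hBb, hγc, L, n, hn, hdisj, hval⟩ | ⟨n, hn, hAn, hBtop, hγval⟩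
    · have hcγ : γ = c := WithTop.coe_eq_coe.mp hγc
      rw [← hcγ] at hval
      subst hAa; subst hBb
      have hab : a < b := WithTop.coe_lt_coe.mp hAB
      have core : ∀ x y : ℚ, IsExpansion L x → cfVal (L ++ [n]) = y →
          min x y = a → max x y = b → ((y : ℚ) : WithTop ℚ) ∈ Qbar m → HasLen γ (m+1) := by
        rintro x y ⟨hLne, hLt, hLx⟩ hy hminxy hmaxxy hymem
        have hone : ∀ z ∈ ([n] : List ℕ), 1 ≤ z := by
          intro z hz; simp only [List.mem_singleton] at hz; omega
        have hone1 : ∀ z ∈ ([n+1] : List ℕ), 1 ≤ z := by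
          intro z hz; simp only [List.mem_singleton] at hz; omega
        have htail_n : ∀ z ∈ (L ++ [n]).tail, 1 ≤ z := tail_append_one_le hLt hone
        have htail_n1 : ∀ z ∈ (L ++ [n+1]).tail, 1 ≤ z := tail_append_one_le hLt hone1
        have hypos : 0 < y := by
          rw [← hy]; exact cfVal_append_pos hLne hLt (by simp) hone
        have hylen : HasLen y (L.sum + n) := ⟨L ++ [n], ⟨by simp, htail_n, hy⟩, by simp⟩
        have hym : L.sum + n ≤ m := by
          rcases mem_Qbar.mp hymem with h0 | htop | ⟨q, hq, hq0, a', ham, hqlen⟩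
          · exfalso
            have : y = 0 := by exact_mod_cast h0
            rw [this] at hypos; exact lt_irrefl 0 hypos
          · exact absurd htop (WithTop.coe_ne_top)
          · have hqy : y = q := WithTop.coe_eq_coe.mp hq
            rw [← hqy] at hqlen
            have := hasLen_unique hylen hqlen
            omega
        have hγlen : HasLen γ (L.sum + n + 1) :=
          ⟨L ++ [n+1], ⟨by simp, htail_n1, hval⟩, by simp; omega⟩
        by_cases hlt : L.sum + n < m
        · exfalso
          have hγmem : ((γ : ℚ) : WithTop ℚ) ∈ Qbar m := mem_Qbar.mpr (Or.inr (Or.inr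
            ⟨γ, rfl, hγ, L.sum + n + 1, by omega, hγlen⟩))
          have hbtw := conv_between L hLne hLt n hn
          rw [hval, hLx, hy, hminxy, hmaxxy] at hbtw
          exact hcontig _ hγmem
            ⟨WithTop.coe_lt_coe.mpr hbtw.1, WithTop.coe_lt_coe.mpr hbtw.2⟩
        · have heq : L.sum + n = m := by omega
          have : L.sum + n + 1 = m + 1 := by omega
          rw [← this]
          exact hγlen
      rcases hdisj with ⟨hexpL, hy⟩ | ⟨hexpL, hy⟩
      · exact core a b hexpL hy (min_eq_left (le_of_lt hab)) (max_eq_right (le_of_lt hab)) hB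
      · exact core b a hexpL hy (min_eq_right (le_of_lt hab)) (max_eq_left (le_of_lt hab)) hA
    · have hγ' : γ = (n:ℚ) + 1 := WithTop.coe_eq_coe.mp hγval
      subst hAn; subst hBtop
      have hnm : n ≤ m := by
        rcases mem_Qbar.mp hA with h0 | htop | ⟨q, hq, hq0, a', ham, hqlen⟩
        · have : (n:ℚ) = 0 := by exact_mod_cast h0
          have : n = 0 := by exact_mod_cast this
          omega
        · exact absurd htop WithTop.coe_ne_top
        · have hqn : (n:ℚ) = q := WithTop.coe_eq_coe.mp hq
          rw [← hqn] at hqlen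
          have := hasLen_unique (hasLen_nat n) hqlen
          omega
      have hmn : m ≤ n := by
        by_contra hcon
        push_neg at hcon
        apply hcontig ((m:ℚ) : WithTop ℚ)
          (mem_Qbar.mpr (Or.inr (Or.inr
            ⟨(m:ℚ), rfl, by exact_mod_cast hm, m, le_refl m, hasLen_nat m⟩)))
        constructor
        · exact WithTop.coe_lt_coe.mpr (by exact_mod_cast hcon)
        · exact WithTop.coe_lt_top _
      have hnm' : n = m := le_antisymm hnm hmn
      refine ⟨[m+1], ⟨by simp, by simp, ?_⟩, by simp⟩
      show ((m+1 : ℕ) : ℚ) = γ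
      rw [hγ', hnm']
      push_cast
      ring

end ResolutionGraph
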